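/- Let K be a lattice polytope in ℝ^n. Then for every lattice point x ∈ nK there exists a lattice point x_1 ∈ K ∩ ℤ^n such that x − x_1 is a lattice point of (n−1)K. That is, nK ∩ ℤ^n = ((n−1)K ∩ ℤ^n) + (K ∩ ℤ^n). -/

import Mathlib

open Pointwise

/-- The set of lattice points (points with integer coordinates) of `ℝ^n`. -/
def latticePoints (n : ℕ) : Set (Fin n → ℝ) := {x | ∀ i, ∃ z : ℤ, x i = (z : ℝ)}

/-- A lattice polytope in `ℝ^n`: the convex hull of a finite nonempty set of lattice points. -/
def IsLatticePolytope {n : ℕ} (K : Set (Fin n → ℝ)) : Prop :=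
  ∃ S : Set (Fin n → ℝ), S.Finite ∧ S.Nonempty ∧ S ⊆ latticePoints n ∧ K = convexHull ℝ S

/-!
By Carathéodory, a lattice point `x ∈ n • conv S` is `∑ cᵢ wᵢ` with `∑ cᵢ = n` over affinely
independent `wᵢ ∈ S`. If some `cᵢ ≥ 1`, peel off `wᵢ`. Otherwise there are exactly `n + 1`
vertices, all `cᵢ > 0`, and `y = ∑ (1 - cᵢ) wᵢ = ∑ wᵢ - x` is a lattice point of the simplex.
Either `y` itself can be peeled off, or exchanging a suitable vertex `wⱼ` for `y` keeps `x` in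
`n` times the new simplex while multiplying its determinant, a nonzero integer, by
`1 - cⱼ ∈ (0, 1)`; so this descent terminates.
-/

open Finset Function

def latticeAddSubgroup (n : ℕ) : AddSubgroup (Fin n → ℝ) where
  carrier := latticePoints n
  add_mem' {x y} hx hy i := by
    obtain ⟨a, ha⟩ := hx i
    obtain ⟨b, hb⟩ := hy i
    exact ⟨a + b, by simp [ha, hb]⟩
  zero_mem' _ := ⟨0, by simp⟩
  neg_mem' {x} hx i := by
    obtain ⟨a, ha⟩ := hx i
    exact ⟨-a, by simp [ha]⟩

section Convex

variable {ι E : Type*} [AddCommGroup E] [Module ℝ E] {K : Set E} {s : Finset ι} {c : ι → ℝ}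
  {v : ι → E}

theorem Convex.sum_smul_mem_smul (hK : Convex ℝ K) (hne : K.Nonempty) (hc : ∀ i ∈ s, 0 ≤ c i)
    (hv : ∀ i ∈ s, v i ∈ K) : ∑ i ∈ s, c i • v i ∈ (∑ i ∈ s, c i) • K := by
  rcases (sum_nonneg hc).eq_or_lt with hzero | hpos
  · have hc0 : ∀ i ∈ s, c i = 0 := (sum_eq_zero_iff_of_nonneg hc).1 hzero.symm
    rw [← hzero, Set.zero_smul_set hne, sum_eq_zero fun i hi => by rw [hc0 i hi, zero_smul]]
    rfl
  · rw [← smul_inv_smul₀ hpos.ne' (∑ i ∈ s, c i • v i)]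
    exact Set.smul_mem_smul_set (hK.centerMass_mem hc hpos hv)

theorem Convex.sum_smul_sub_mem_smul [DecidableEq ι] (hK : Convex ℝ K) (hc : ∀ i ∈ s, 0 ≤ c i)
    (hv : ∀ i ∈ s, v i ∈ K) {j : ι} (hj : j ∈ s) (hcj : 1 ≤ c j) :
    ∑ i ∈ s, c i • v i - v j ∈ (∑ i ∈ s, c i - 1) • K := by
  have key := hK.sum_smul_mem_smul ⟨v j, hv j hj⟩ (c := c - Pi.single j 1)
    (fun i hi => ?_) hv
  · simpa [sub_smul, sum_sub_distrib, Pi.single_apply, hj] using key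
  · rcases eq_or_ne i j with rfl | hij
    · simpa using hcj
    · simpa [hij] using hc i hi

end Convex

theorem Finset.pos_of_forall_lt_one_of_sum_eq {ι : Type*} [DecidableEq ι] {s : Finset ι}
    (hs : 1 < #s) {c : ι → ℝ} (hc : ∀ i ∈ s, c i < 1) (hsum : ∑ i ∈ s, c i = #s - 1) {i : ι} (hi : i ∈ s) :
    0 < c i := by
  have hne : (s.erase i).Nonempty := by
    rw [← card_pos, card_erase_of_mem hi]
    omega
  have hlt : ∑ j ∈ s.erase i, c j < #s - 1 := by
    simpa [card_erase_of_mem hi, Nat.cast_sub hs.le] using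
      sum_lt_sum_of_nonempty hne fun j hj => hc j (mem_of_mem_erase hj)
  linarith [add_sum_erase s c hi]

theorem sum_update_smul_update {ι M : Type*} [Fintype ι] [DecidableEq ι] [AddCommMonoid M]
    [Module ℝ M] {a : ι → ℝ} {j : ι} (haj : a j = 0) (v : ι → M) (b : ℝ) (y : M) :
    ∑ i, update a j b i • update v j y i = ∑ i, a i • v i + b • y := by
  have hupd : (fun i => update a j b i • update v j y i) =
      update (fun i => a i • v i) j (b • y) := funext (apply_update₂ (fun _ => (· • ·)) a v j b y)
  rw [hupd, sum_update_of_mem (mem_univ j), ← add_sum_erase univ _ (mem_univ j), haj, zero_smul,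
    zero_add, sdiff_singleton_eq_erase, add_comm]

section Simplex

variable {n : ℕ}

/-- Rows `(1, wᵢ)`: the determinant is `n!` times the signed volume of the simplex `w`. -/
def augmentedMatrix (w : Fin (n + 1) → Fin n → ℝ) : Matrix (Fin (n + 1)) (Fin (n + 1)) ℝ :=
  Matrix.of fun i => Fin.cons 1 (w i)

theorem det_augmentedMatrix_update (w : Fin (n + 1) → Fin n → ℝ) (j : Fin (n + 1))
    {μ : Fin (n + 1) → ℝ} (hμ : ∑ i, μ i = 1) :
    (augmentedMatrix (update w j (∑ i, μ i • w i))).det = μ j * (augmentedMatrix w).det := by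
  have hrow : augmentedMatrix (update w j (∑ i, μ i • w i)) =
      (augmentedMatrix w).updateRow j (∑ i, μ i • augmentedMatrix w i) := by
    ext i k
    rcases eq_or_ne i j with rfl | hij
    · refine Fin.cases ?_ (fun k => ?_) k <;>
        simp [augmentedMatrix, hμ, Finset.sum_apply]
    · simp [augmentedMatrix, hij]
  rw [hrow, Matrix.det_updateRow_sum, smul_eq_mul]

theorem det_augmentedMatrix_ne_zero {w : Fin (n + 1) → Fin n → ℝ} (hw : AffineIndependent ℝ w) :
    (augmentedMatrix w).det ≠ 0 := by
  intro hdet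
  obtain ⟨v, hv0, hv⟩ := Matrix.exists_vecMul_eq_zero_iff.mpr hdet
  have hsum : ∑ i, v i = 0 := by
    simpa [Matrix.vecMul, dotProduct, augmentedMatrix] using congrFun hv 0
  have hcomb : ∑ i, v i • w i = 0 := by
    funext k
    simpa [Matrix.vecMul, dotProduct, augmentedMatrix, Finset.sum_apply] using congrFun hv k.succ
  exact hv0 (funext fun i => affineIndependent_iff.mp hw univ v hsum hcomb i (mem_univ i))

theorem exists_intCast_det_augmentedMatrix {w : Fin (n + 1) → Fin n → ℝ}
    (hw : ∀ i, w i ∈ latticePoints n) : ∃ z : ℤ, (augmentedMatrix w).det = z := by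
  choose W hW using hw
  refine ⟨(Matrix.of fun i => (Fin.cons 1 (W i) : Fin (n + 1) → ℤ)).det, ?_⟩
  rw [← eq_intCast (Int.castRingHom ℝ), RingHom.map_det]
  congr 1
  ext i k
  refine Fin.cases ?_ (fun k => ?_) k <;> simp [augmentedMatrix, hW]

structure SimplexRep (K : Set (Fin n → ℝ)) (x : Fin n → ℝ) (w : Fin (n + 1) → Fin n → ℝ)
    (c : Fin (n + 1) → ℝ) : Prop where
  mem : ∀ i, w i ∈ K
  lattice : ∀ i, w i ∈ latticePoints n
  det_ne_zero : (augmentedMatrix w).det ≠ 0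
  nonneg : ∀ i, 0 ≤ c i
  sum_eq : ∑ i, c i = n
  eq_sum : x = ∑ i, c i • w i

variable {K : Set (Fin n → ℝ)} {x : Fin n → ℝ} {w : Fin (n + 1) → Fin n → ℝ} {c : Fin (n + 1) → ℝ}

theorem SimplexRep.peel_or_exchange (hn : 0 < n) (hK : Convex ℝ K) (hx : x ∈ latticePoints n)
    (h : SimplexRep K x w c) (hc : ∀ i, c i < 1) :
    (∃ x₁ ∈ K ∩ latticePoints n, x - x₁ ∈ ((n : ℝ) - 1) • K) ∨
      ∃ w' c', SimplexRep K x w' c' ∧ |(augmentedMatrix w').det| < |(augmentedMatrix w).det| := by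
  classical
  have hcpos : ∀ i, 0 < c i := fun i =>
    pos_of_forall_lt_one_of_sum_eq (s := univ) (by simp [hn]) (fun i _ => hc i) (by simp [h.sum_eq])
      (mem_univ i)
  set μ : Fin (n + 1) → ℝ := fun i => 1 - c i
  have hμpos : ∀ i, 0 < μ i := fun i => sub_pos.2 (hc i)
  have hμsum : ∑ i, μ i = 1 := by simp [μ, sum_sub_distrib, h.sum_eq]
  set y := ∑ i, μ i • w i
  have hyK : y ∈ K := hK.sum_mem (fun i _ => (hμpos i).le) hμsum fun i _ => h.mem i
  have hyL : y ∈ latticePoints n := by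
    have hy : y = ∑ i, w i - x := by simp [y, μ, sub_smul, sum_sub_distrib, h.eq_sum]
    rw [hy]
    exact (latticeAddSubgroup n).sub_mem
      ((latticeAddSubgroup n).sum_mem fun i _ => h.lattice i) hx
  -- `t` is the largest scalar with `c - t • μ ≥ 0`, and that vector vanishes at `j`.
  obtain ⟨j, -, hj⟩ := exists_min_image univ (fun i => c i / μ i) univ_nonempty
  set t := c j / μ j
  have htμ : ∀ i, t * μ i ≤ c i := fun i => (le_div_iff₀ (hμpos i)).1 (hj i (mem_univ i))
  by_cases ht : 1 ≤ t
  · refine .inl ⟨y, ⟨hyK, hyL⟩, ?_⟩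
    have hle : ∀ i ∈ univ, 0 ≤ (c - μ) i := fun i _ =>
      sub_nonneg.2 ((le_mul_of_one_le_left (hμpos i).le ht).trans (htμ i))
    simpa [sub_smul, sum_sub_distrib, h.sum_eq, hμsum, ← h.eq_sum] using
      hK.sum_smul_mem_smul ⟨y, hyK⟩ hle fun i _ => h.mem i
  · set a := c - t • μ
    have haj : a j = 0 := by simp [a, t, div_mul_cancel₀ _ (hμpos j).ne']
    have hdet := det_augmentedMatrix_update w j hμsum
    refine .inr ⟨update w j y, update a j t, ⟨?_, ?_, ?_, ?_, ?_, ?_⟩, ?_⟩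
    · exact forall_update_iff w (p := fun _ v => v ∈ K) |>.2 ⟨hyK, fun i _ => h.mem i⟩
    · exact forall_update_iff w (p := fun _ v => v ∈ latticePoints n) |>.2
        ⟨hyL, fun i _ => h.lattice i⟩
    · rw [hdet]
      exact mul_ne_zero (hμpos j).ne' h.det_ne_zero
    · exact forall_update_iff a (p := fun _ r => 0 ≤ r) |>.2
        ⟨div_nonneg (h.nonneg j) (hμpos j).le, fun i _ => sub_nonneg.2 (htμ i)⟩
    · simpa [a, sum_sub_distrib, ← mul_sum, hμsum, h.sum_eq] using
        sum_update_smul_update haj (fun _ => (1 : ℝ)) t 1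
    · rw [sum_update_smul_update haj]
      simp [a, y, sub_smul, sum_sub_distrib, smul_sum, smul_smul, h.eq_sum]
    · rw [hdet, abs_mul, abs_of_pos (hμpos j)]
      exact mul_lt_of_lt_one_left (abs_pos.2 h.det_ne_zero) (sub_lt_self 1 (hcpos j))

theorem SimplexRep.exists_sub_mem_smul (hn : 0 < n) (hK : Convex ℝ K) (hx : x ∈ latticePoints n)
    (h : SimplexRep K x w c) : ∃ x₁ ∈ K ∩ latticePoints n, x - x₁ ∈ ((n : ℝ) - 1) • K := by
  obtain ⟨z, hz⟩ := exists_intCast_det_augmentedMatrix h.lattice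
  induction hd : z.natAbs using Nat.strong_induction_on generalizing w c z with
  | _ d ih =>
  by_cases hc : ∃ i, 1 ≤ c i
  · obtain ⟨i, hi⟩ := hc
    refine ⟨w i, ⟨h.mem i, h.lattice i⟩, ?_⟩
    simpa [h.sum_eq, ← h.eq_sum] using hK.sum_smul_sub_mem_smul (s := univ)
      (fun j _ => h.nonneg j) (fun j _ => h.mem j) (mem_univ i) hi
  rcases h.peel_or_exchange hn hK hx (by simpa using hc) with hpeel | ⟨w', c', h', hlt⟩
  · exact hpeel
  obtain ⟨z', hz'⟩ := exists_intCast_det_augmentedMatrix h'.lattice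
  have hzz : |z'| < |z| := by
    rw [hz, hz'] at hlt
    exact_mod_cast hlt
  refine ih z'.natAbs ?_ h' z' hz' rfl
  rw [Int.abs_eq_natAbs, Int.abs_eq_natAbs] at hzz
  omega

theorem exists_sub_mem_smul_convexHull (hn : 0 < n) {S : Set (Fin n → ℝ)}
    (hS : S ⊆ latticePoints n) (hx : x ∈ latticePoints n) (hxS : x ∈ (n : ℝ) • convexHull ℝ S) :
    ∃ x₁ ∈ convexHull ℝ S ∩ latticePoints n, x - x₁ ∈ ((n : ℝ) - 1) • convexHull ℝ S := by
  classical
  have hK : Convex ℝ (convexHull ℝ S) := convex_convexHull ℝ S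
  obtain ⟨y, hy, rfl⟩ := hxS
  obtain ⟨ι, _, v, g, hvS, hind, hg0, hg1, hgy⟩ := eq_pos_convex_span_of_mem_convexHull hy
  have hvK : ∀ i, v i ∈ convexHull ℝ S := fun i => subset_convexHull ℝ S (hvS ⟨i, rfl⟩)
  have hvL : ∀ i, v i ∈ latticePoints n := fun i => hS (hvS ⟨i, rfl⟩)
  have hc0 : ∀ i, 0 ≤ (n : ℝ) * g i := fun i => mul_nonneg n.cast_nonneg (hg0 i).le
  have hcsum : ∑ i, (n : ℝ) * g i = n := by rw [← mul_sum, hg1, mul_one]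
  have hxc : (n : ℝ) • y = ∑ i, ((n : ℝ) * g i) • v i := by simp_rw [← hgy, smul_sum, smul_smul]
  have hcard : Fintype.card ι ≤ n + 1 := by
    simpa using hind.card_le_finrank_succ.trans (Nat.succ_le_succ (Submodule.finrank_le _))
  rcases hcard.lt_or_eq with hlt | heq
  · have hne : (univ : Finset ι).Nonempty := nonempty_of_sum_ne_zero (f := g) (by simp [hg1])
    obtain ⟨i, -, hi⟩ := exists_le_of_sum_le hne (f := fun _ => 1) (g := fun i => (n : ℝ) * g i)
      (by simpa [hcsum] using Nat.le_of_lt_succ hlt)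
    refine ⟨v i, ⟨hvK i, hvL i⟩, ?_⟩
    simpa [hcsum, ← hxc] using hK.sum_smul_sub_mem_smul (s := univ)
      (fun j _ => hc0 j) (fun j _ => hvK j) (mem_univ i) hi
  · let e := (Fintype.equivFinOfCardEq heq).symm
    refine SimplexRep.exists_sub_mem_smul hn hK hx (w := v ∘ e) (c := fun i => (n : ℝ) * g (e i))
      ⟨fun i => hvK (e i), fun i => hvL (e i),
        det_augmentedMatrix_ne_zero ((affineIndependent_equiv e).2 hind), fun i => hc0 (e i),
        ?_, ?_⟩
    · rw [e.sum_comp (fun i => (n : ℝ) * g i), hcsum]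
    · exact hxc.trans (e.sum_comp fun i => ((n : ℝ) * g i) • v i).symm

end Simplex

/-- Let `K` be a lattice polytope in `ℝ^n`.  Then every lattice point `x ∈ nK` is of the
form `x₁ + z` with `x₁ ∈ K ∩ ℤ^n` and `z` a lattice point of `(n-1)K`; that is,
`nK ∩ ℤ^n = ((n-1)K ∩ ℤ^n) + (K ∩ ℤ^n)` as a Minkowski sum. -/
theorem lattice_polytope_peel_one (n : ℕ)
    (K : Set (Fin n → ℝ)) (hK : IsLatticePolytope K) :
    ((n : ℝ) • K) ∩ latticePoints n =
      (((n - 1 : ℕ) : ℝ) • K) ∩ latticePoints n + (K ∩ latticePoints n) := by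
  obtain ⟨S, -, ⟨s, hs⟩, hSL, rfl⟩ := hK
  have hsK : s ∈ convexHull ℝ S := subset_convexHull ℝ S hs
  rcases Nat.eq_zero_or_pos n with rfl | hn
  · have hL : ∀ y : Fin 0 → ℝ, y ∈ latticePoints 0 := fun _ i => i.elim0
    have hmem {c : ℝ} : c • s ∈ c • convexHull ℝ S ∩ latticePoints 0 :=
      Set.mem_inter (Set.smul_mem_smul_set hsK) (hL _)
    exact (Set.nonempty_of_mem hmem).eq_univ.trans
      (Set.nonempty_of_mem (Set.add_mem_add hmem (Set.mem_inter hsK (hL s)))).eq_univ.symm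
  apply subset_antisymm
  · rintro x ⟨hxK, hxL⟩
    obtain ⟨x₁, hx₁, hsub⟩ := exists_sub_mem_smul_convexHull hn hSL hxL hxK
    refine ⟨x - x₁, ⟨by rwa [Nat.cast_pred hn], ?_⟩, x₁, hx₁, sub_add_cancel x x₁⟩
    exact (latticeAddSubgroup n).sub_mem hxL hx₁.2
  · rintro _ ⟨a, ⟨ha, haL⟩, b, ⟨hb, hbL⟩, rfl⟩
    refine ⟨?_, (latticeAddSubgroup n).add_mem haL hbL⟩
    rw [← sub_add_cancel (n : ℝ) 1, ← Nat.cast_pred hn,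
      (convex_convexHull ℝ S).add_smul (Nat.cast_nonneg _) zero_le_one, one_smul]
    exact Set.add_mem_add ha hb
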